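/- arXiv:2308.00977 — 2 statements merged into one kernel-verified Lean document; each statement's English description precedes it below -/
import Mathlib

section
/- There exists a surjective group homomorphism π : W₁ → H₁ (determined by sending x, y, z, α to x, y, z, α respectively and α₁, α₂, α₃, α₄ to 1) whose kernel K has order p⁴ and satisfies K ≤ Z(W₁) and K ≤ [W₁, W₁], where Z(W₁) is the center and [W₁,W₁] the commutator subgroup of W₁. -/
/-!
The relations of `W₁` also hold for the pairs `(x, x'), (y, y'), (z, z'), (α, γ), (αᵢ, 1)` in
`W₁ × H₁`. Adjoining the generators `x, y, z, α` one at a time, each normalising the subgroup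
generated by the later ones, bounds the order of any group generated by elements satisfying these
relations by `p⁵ · |⟨α₁, α₂, α₃, α₄⟩| ≤ p⁹`. Hence the subgroup of `W₁ × H₁` generated by the pairs
projects onto `W₁` with order at most `|W₁|`: it is the graph of a homomorphism `π`. Its kernel
contains `⟨α₁, α₂, α₃, α₄⟩`, which is central and consists of commutators, and the same bound in
`W₁` gives `|⟨α₁, α₂, α₃, α₄⟩| ≥ p⁹ / p⁵ = |ker π|`.
-/

/-- The commutator convention used in the paper: `[a, b] = a⁻¹ * b⁻¹ * a * b`. -/
def pcomm {G : Type*} [Group G] (a b : G) : G := a⁻¹ * b⁻¹ * a * b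

/-- `IsW1 p W x y z α a₁ a₂ a₃ a₄` says that `W` is (a copy of) the finite group `W₁`
of order `p ^ 9` with presentation on generators `x, y, z, α, α₁, α₂, α₃, α₄` and relations
`[x,y] = z`, `[x,z] = α₁`, `[y,z] = α₂`, `[x,α] = α₃`, `[y,α] = α₄`, `[z,α] = 1`,
`x^p = y^p = z^p = α₁^p = α₂^p = α₃^p = α₄^p = 1`, `α^(p²) = 1`, and
`α₁, α₂, α₃, α₄` commute with all generators. -/
def IsW1 (p : ℕ) (W : Type*) [Group W] (x y z α a₁ a₂ a₃ a₄ : W) : Prop :=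
  Subgroup.closure {x, y, z, α, a₁, a₂, a₃, a₄} = ⊤ ∧
  Nat.card W = p ^ 9 ∧
  pcomm x y = z ∧ pcomm x z = a₁ ∧ pcomm y z = a₂ ∧
  pcomm x α = a₃ ∧ pcomm y α = a₄ ∧ pcomm z α = 1 ∧
  x ^ p = 1 ∧ y ^ p = 1 ∧ z ^ p = 1 ∧
  a₁ ^ p = 1 ∧ a₂ ^ p = 1 ∧ a₃ ^ p = 1 ∧ a₄ ^ p = 1 ∧ α ^ p ^ 2 = 1 ∧
  ∀ c ∈ ({a₁, a₂, a₃, a₄} : Set W), ∀ g ∈ ({x, y, z, α, a₁, a₂, a₃, a₄} : Set W),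
    c * g = g * c

/-- `IsH1 p H x y z γ` says that `H` is (a copy of) `H₁ = E × C_(p²)`, where `E` is the
extraspecial group of order `p³` and exponent `p` generated by `x, y, z` with
`[x,y] = z`, `[x,z] = [y,z] = 1`, `x^p = y^p = z^p = 1`, and `γ` generates the central
direct factor `C_(p²)`; so `H` has order `p⁵`. -/
def IsH1 (p : ℕ) (H : Type*) [Group H] (x y z γ : H) : Prop :=
  Subgroup.closure {x, y, z, γ} = ⊤ ∧
  Nat.card H = p ^ 5 ∧
  pcomm x y = z ∧ pcomm x z = 1 ∧ pcomm y z = 1 ∧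
  x ^ p = 1 ∧ y ^ p = 1 ∧ z ^ p = 1 ∧ γ ^ p ^ 2 = 1 ∧
  ∀ g ∈ ({x, y, z, γ} : Set H), γ * g = g * γ

open scoped commutatorElement Pointwise

section Commutators

variable {G : Type*} [Group G]

theorem pcomm_eq_one_of_commute {a b : G} (h : Commute a b) : pcomm a b = 1 := by
  rw [pcomm, mul_assoc, h.eq]; group

theorem commute_of_pcomm_eq_one {a b : G} (h : pcomm a b = 1) : Commute a b := by
  rw [pcomm, mul_assoc, mul_assoc, inv_mul_eq_one, eq_inv_mul_iff_mul_eq] at h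
  exact h.symm

theorem mul_mul_inv_eq_mul_conj_pcomm (g t : G) : g * t * g⁻¹ = t * (g * pcomm g t * g⁻¹) := by
  rw [pcomm]; group

theorem mul_mul_inv_mem_of_pcomm {N : Subgroup G} {g t : G} (ht : t ∈ N)
    (hc : g * pcomm g t * g⁻¹ ∈ N) : g * t * g⁻¹ ∈ N := by
  rw [mul_mul_inv_eq_mul_conj_pcomm]; exact N.mul_mem ht hc

theorem pcomm_mem_commutator (a b : G) : pcomm a b ∈ commutator G := by
  have h : pcomm a b = ⁅a⁻¹, b⁻¹⁆ := by simp [pcomm, commutatorElement_def]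
  rw [h, commutator_def]
  exact Subgroup.commutator_mem_commutator (Subgroup.mem_top _) (Subgroup.mem_top _)

theorem Subgroup.mem_center_of_forall_commute {S : Set G} (hS : closure S = ⊤) {g : G}
    (h : ∀ s ∈ S, Commute g s) : g ∈ center G := by
  rw [← centralizer_univ, ← coe_top, ← hS, centralizer_closure, mem_centralizer_iff]
  exact fun s hs => (h s hs).eq.symm

end Commutators

namespace Subgroup

variable {G : Type*} [Group G] [Finite G]

theorem card_closure_insert_le {g : G} {T : Set G} {n : ℕ} (hn : 0 < n)
    (hg : g ^ n = 1) (hconj : ∀ t ∈ T, g * t * g⁻¹ ∈ closure T) :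
    Nat.card (closure (insert g T)) ≤ n * Nat.card (closure T) := by
  have hnorm : zpowers g ≤ normalizer (closure T : Set G) := by
    refine zpowers_le.2 (mem_normalizer_fintype fun t ht => ?_)
    have hle : closure T ≤ (closure T).comap (MulAut.conj g).toMonoidHom :=
      (closure_le _).2 hconj
    exact hle ht
  rw [Set.insert_eq, Subgroup.closure_union, ← zpowers_eq_closure]
  calc Nat.card ↥(zpowers g ⊔ closure T)
      = Nat.card ((zpowers g : Set G) * (closure T : Set G)) := by
        rw [← coe_mul_of_left_le_normalizer_right _ _ hnorm]; rfl
    _ ≤ Nat.card (zpowers g) * Nat.card (closure T) := Set.natCard_mul_le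
    _ ≤ n * Nat.card (closure T) := by
        gcongr
        rw [Nat.card_zpowers]
        exact orderOf_le_of_pow_eq_one hn hg

theorem card_closure_insert_le_of_commute {g : G} {T : Set G} {n : ℕ} (hn : 0 < n)
    (hg : g ^ n = 1) (hcomm : ∀ t ∈ T, Commute g t) :
    Nat.card (closure (insert g T)) ≤ n * Nat.card (closure T) :=
  card_closure_insert_le hn hg fun t ht => by
    rw [(hcomm t ht).mul_inv_cancel]; exact subset_closure ht

theorem card_closure_le_pow_card_of_commute [DecidableEq G] (s : Finset G) {n : ℕ}
    (hn : 0 < n) (hpow : ∀ a ∈ s, a ^ n = 1) (hcomm : ∀ a ∈ s, ∀ b ∈ s, Commute a b) :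
    Nat.card (closure (s : Set G)) ≤ n ^ s.card := by
  induction s using Finset.induction_on with
  | empty => simp
  | insert a s ha ih =>
    rw [Finset.coe_insert, Finset.card_insert_of_notMem ha, pow_succ']
    have hs : ∀ b ∈ s, b ∈ insert a s := fun b hb => Finset.mem_insert_of_mem hb
    calc Nat.card (closure (insert a (s : Set G)))
        ≤ n * Nat.card (closure (s : Set G)) :=
          card_closure_insert_le_of_commute hn (hpow a (Finset.mem_insert_self a s))
            fun b hb => hcomm a (Finset.mem_insert_self a s) b (hs b hb)
      _ ≤ n * n ^ s.card := by
          gcongr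
          exact ih (fun b hb => hpow b (hs b hb)) fun b hb c hc => hcomm b (hs b hb) c (hs c hc)

end Subgroup

structure W1Relations (p : ℕ) {G : Type*} [Group G] (x y z α a₁ a₂ a₃ a₄ : G) : Prop where
  pcomm_x_y : pcomm x y = z
  pcomm_x_z : pcomm x z = a₁
  pcomm_y_z : pcomm y z = a₂
  pcomm_x_α : pcomm x α = a₃
  pcomm_y_α : pcomm y α = a₄
  pcomm_z_α : pcomm z α = 1
  pow_x : x ^ p = 1
  pow_y : y ^ p = 1
  pow_z : z ^ p = 1
  pow_a₁ : a₁ ^ p = 1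
  pow_a₂ : a₂ ^ p = 1
  pow_a₃ : a₃ ^ p = 1
  pow_a₄ : a₄ ^ p = 1
  pow_α : α ^ p ^ 2 = 1
  central : ∀ c ∈ ({a₁, a₂, a₃, a₄} : Set G), ∀ g ∈ ({x, y, z, α, a₁, a₂, a₃, a₄} : Set G),
    Commute c g

theorem IsW1.w1Relations {p : ℕ} {W : Type*} [Group W] {x y z α a₁ a₂ a₃ a₄ : W}
    (h : IsW1 p W x y z α a₁ a₂ a₃ a₄) : W1Relations p x y z α a₁ a₂ a₃ a₄ :=
  let ⟨_, _, h₁, h₂, h₃, h₄, h₅, h₆, h₇, h₈, h₉, h₁₀, h₁₁, h₁₂, h₁₃, h₁₄, h₁₅⟩ := h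
  ⟨h₁, h₂, h₃, h₄, h₅, h₆, h₇, h₈, h₉, h₁₀, h₁₁, h₁₂, h₁₃, h₁₄, h₁₅⟩

theorem IsH1.w1Relations {p : ℕ} {H : Type*} [Group H] {x y z γ : H} (h : IsH1 p H x y z γ) :
    W1Relations p x y z γ 1 1 1 1 := by
  obtain ⟨_, _, hxy, hxz, hyz, hx, hy, hz, hγp, hcomm⟩ := h
  have hγ (g : H) (hg : g ∈ ({x, y, z, γ} : Set H)) : pcomm g γ = 1 :=
    pcomm_eq_one_of_commute (hcomm g hg).symm
  refine ⟨hxy, hxz, hyz, hγ x (by simp), hγ y (by simp), hγ z (by simp),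
    hx, hy, hz, one_pow p, one_pow p, one_pow p, one_pow p, hγp, ?_⟩
  intro c hc g _
  obtain rfl : c = 1 := by simpa using hc
  exact Commute.one_left g

namespace W1Relations

variable {p : ℕ} {G : Type*} [Group G] {x y z α a₁ a₂ a₃ a₄ : G}

theorem prod {H : Type*} [Group H] {x' y' z' α' a₁' a₂' a₃' a₄' : H}
    (h : W1Relations p x y z α a₁ a₂ a₃ a₄) (h' : W1Relations p x' y' z' α' a₁' a₂' a₃' a₄') :
    W1Relations p (x, x') (y, y') (z, z') (α, α') (a₁, a₁') (a₂, a₂') (a₃, a₃') (a₄, a₄') where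
  pcomm_x_y := Prod.ext h.pcomm_x_y h'.pcomm_x_y
  pcomm_x_z := Prod.ext h.pcomm_x_z h'.pcomm_x_z
  pcomm_y_z := Prod.ext h.pcomm_y_z h'.pcomm_y_z
  pcomm_x_α := Prod.ext h.pcomm_x_α h'.pcomm_x_α
  pcomm_y_α := Prod.ext h.pcomm_y_α h'.pcomm_y_α
  pcomm_z_α := Prod.ext h.pcomm_z_α h'.pcomm_z_α
  pow_x := Prod.ext h.pow_x h'.pow_x
  pow_y := Prod.ext h.pow_y h'.pow_y
  pow_z := Prod.ext h.pow_z h'.pow_z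
  pow_a₁ := Prod.ext h.pow_a₁ h'.pow_a₁
  pow_a₂ := Prod.ext h.pow_a₂ h'.pow_a₂
  pow_a₃ := Prod.ext h.pow_a₃ h'.pow_a₃
  pow_a₄ := Prod.ext h.pow_a₄ h'.pow_a₄
  pow_α := Prod.ext h.pow_α h'.pow_α
  central := by
    simp only [Set.mem_insert_iff, Set.mem_singleton_iff]
    rintro _ hc _ hg
    rcases hc with rfl | rfl | rfl | rfl <;>
      rcases hg with rfl | rfl | rfl | rfl | rfl | rfl | rfl | rfl <;>
      exact Prod.ext (h.central _ (by simp) _ (by simp)) (h'.central _ (by simp) _ (by simp))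

theorem commute_of_mem (h : W1Relations p x y z α a₁ a₂ a₃ a₄) {g c : G}
    (hg : g ∈ ({x, y, z, α, a₁, a₂, a₃, a₄} : Set G)) (hc : c ∈ ({a₁, a₂, a₃, a₄} : Set G)) :
    Commute g c :=
  (h.central c hc g hg).symm

theorem mul_mul_inv_mem_closure_of_mem (h : W1Relations p x y z α a₁ a₂ a₃ a₄) {g c : G}
    (hg : g ∈ ({x, y, z, α, a₁, a₂, a₃, a₄} : Set G)) (hc : c ∈ ({a₁, a₂, a₃, a₄} : Set G))
    {T : Set G} (hT : {a₁, a₂, a₃, a₄} ⊆ T) : g * c * g⁻¹ ∈ Subgroup.closure T := by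
  rw [(h.commute_of_mem hg hc).mul_inv_cancel]
  exact Subgroup.subset_closure (hT hc)

theorem mul_mul_inv_mem_closure_of_pcomm (h : W1Relations p x y z α a₁ a₂ a₃ a₄) {g t c : G}
    (hgt : pcomm g t = c) (hg : g ∈ ({x, y, z, α, a₁, a₂, a₃, a₄} : Set G))
    (hc : c ∈ ({a₁, a₂, a₃, a₄} : Set G)) {T : Set G} (hT : {a₁, a₂, a₃, a₄} ⊆ T) (ht : t ∈ T) :
    g * t * g⁻¹ ∈ Subgroup.closure T :=
  mul_mul_inv_mem_of_pcomm (Subgroup.subset_closure ht)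
    (hgt ▸ h.mul_mul_inv_mem_closure_of_mem hg hc hT)

theorem card_closure_le_mul [Finite G] (hp : 0 < p) (h : W1Relations p x y z α a₁ a₂ a₃ a₄) :
    Nat.card (Subgroup.closure {x, y, z, α, a₁, a₂, a₃, a₄}) ≤
      p ^ 5 * Nat.card (Subgroup.closure {a₁, a₂, a₃, a₄}) := by
  set A : Set G := {a₁, a₂, a₃, a₄}
  have hx : Nat.card (Subgroup.closure {x, y, z, α, a₁, a₂, a₃, a₄}) ≤
      p * Nat.card (Subgroup.closure {y, z, α, a₁, a₂, a₃, a₄}) := by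
    refine Subgroup.card_closure_insert_le hp h.pow_x ?_
    have hT : A ⊆ {y, z, α, a₁, a₂, a₃, a₄} := by simp [A, Set.insert_subset_iff]
    have hxz := h.mul_mul_inv_mem_closure_of_pcomm h.pcomm_x_z (by simp) (by simp) hT (by simp)
    rintro t (rfl | rfl | rfl | ht)
    · exact mul_mul_inv_mem_of_pcomm (Subgroup.subset_closure (by simp)) (h.pcomm_x_y ▸ hxz)
    · exact hxz
    · exact h.mul_mul_inv_mem_closure_of_pcomm h.pcomm_x_α (by simp) (by simp) hT (by simp)
    · exact h.mul_mul_inv_mem_closure_of_mem (by simp) ht hT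
  have hy : Nat.card (Subgroup.closure {y, z, α, a₁, a₂, a₃, a₄}) ≤
      p * Nat.card (Subgroup.closure {z, α, a₁, a₂, a₃, a₄}) := by
    refine Subgroup.card_closure_insert_le hp h.pow_y ?_
    have hT : A ⊆ {z, α, a₁, a₂, a₃, a₄} := by simp [A, Set.insert_subset_iff]
    rintro t (rfl | rfl | ht)
    · exact h.mul_mul_inv_mem_closure_of_pcomm h.pcomm_y_z (by simp) (by simp) hT (by simp)
    · exact h.mul_mul_inv_mem_closure_of_pcomm h.pcomm_y_α (by simp) (by simp) hT (by simp)
    · exact h.mul_mul_inv_mem_closure_of_mem (by simp) ht hT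
  have hz : Nat.card (Subgroup.closure {z, α, a₁, a₂, a₃, a₄}) ≤
      p * Nat.card (Subgroup.closure {α, a₁, a₂, a₃, a₄}) := by
    refine Subgroup.card_closure_insert_le_of_commute hp h.pow_z ?_
    rintro t (rfl | ht)
    · exact commute_of_pcomm_eq_one h.pcomm_z_α
    · exact h.commute_of_mem (by simp) ht
  have hα : Nat.card (Subgroup.closure {α, a₁, a₂, a₃, a₄}) ≤
      p ^ 2 * Nat.card (Subgroup.closure A) :=
    Subgroup.card_closure_insert_le_of_commute (pow_pos hp 2) h.pow_α
      fun _ hc => h.commute_of_mem (by simp) hc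
  calc _ ≤ p * (p * (p * (p ^ 2 * Nat.card (Subgroup.closure A)))) := by
        refine hx.trans (Nat.mul_le_mul_left p (hy.trans (Nat.mul_le_mul_left p
          (hz.trans (Nat.mul_le_mul_left p hα)))))
    _ = p ^ 5 * Nat.card (Subgroup.closure A) := by ring

theorem card_closure_central_le [Finite G] (hp : 0 < p) (h : W1Relations p x y z α a₁ a₂ a₃ a₄) :
    Nat.card (Subgroup.closure ({a₁, a₂, a₃, a₄} : Set G)) ≤ p ^ 4 := by
  classical
  have hgen : ∀ b ∈ ({a₁, a₂, a₃, a₄} : Finset G),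
      b ∈ ({x, y, z, α, a₁, a₂, a₃, a₄} : Set G) := by
    simp
  have hcard := Subgroup.card_closure_le_pow_card_of_commute {a₁, a₂, a₃, a₄} hp
    (by simp [h.pow_a₁, h.pow_a₂, h.pow_a₃, h.pow_a₄])
    fun a ha b hb => h.central a (by simpa using ha) b (hgen b hb)
  rw [Finset.coe_insert, Finset.coe_insert, Finset.coe_insert, Finset.coe_singleton] at hcard
  exact hcard.trans (Nat.pow_le_pow_right hp Finset.card_le_four)

theorem card_closure_le [Finite G] (hp : 0 < p) (h : W1Relations p x y z α a₁ a₂ a₃ a₄) :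
    Nat.card (Subgroup.closure {x, y, z, α, a₁, a₂, a₃, a₄}) ≤ p ^ 9 :=
  calc _ ≤ p ^ 5 * p ^ 4 :=
        (h.card_closure_le_mul hp).trans (Nat.mul_le_mul_left _ (h.card_closure_central_le hp))
    _ = p ^ 9 := by ring

theorem closure_central_le_center (h : W1Relations p x y z α a₁ a₂ a₃ a₄)
    (hgen : Subgroup.closure {x, y, z, α, a₁, a₂, a₃, a₄} = ⊤) :
    Subgroup.closure {a₁, a₂, a₃, a₄} ≤ Subgroup.center G :=
  (Subgroup.closure_le _).2 fun c hc =>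
    Subgroup.mem_center_of_forall_commute hgen (h.central c hc)

theorem closure_central_le_commutator (h : W1Relations p x y z α a₁ a₂ a₃ a₄) :
    Subgroup.closure {a₁, a₂, a₃, a₄} ≤ commutator G := by
  rw [Subgroup.closure_le]
  rintro _ (rfl | rfl | rfl | rfl)
  · exact h.pcomm_x_z ▸ pcomm_mem_commutator x z
  · exact h.pcomm_y_z ▸ pcomm_mem_commutator y z
  · exact h.pcomm_x_α ▸ pcomm_mem_commutator x α
  · exact h.pcomm_y_α ▸ pcomm_mem_commutator y α

end W1Relations

section Hom

variable {G H : Type*} [Group G] [Group H]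

theorem MonoidHom.card_ker_mul_card_of_surjective (f : G →* H) (hf : Function.Surjective f) :
    Nat.card f.ker * Nat.card H = Nat.card G := by
  rw [← Subgroup.card_mul_index f.ker, Subgroup.index_ker, f.range_eq_top.2 hf, Subgroup.card_top]

theorem MonoidHom.surjective_of_closure_subset_range (f : G →* H) {S : Set H}
    (hS : Subgroup.closure S = ⊤) (h : S ⊆ f.range) : Function.Surjective f := by
  rw [← MonoidHom.range_eq_top, eq_top_iff, ← hS, Subgroup.closure_le]
  exact h

theorem MonoidHom.ker_eq_of_le_of_card_le [Finite G] (f : G →* H) (hf : Function.Surjective f)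
    {A : Subgroup G} (hA : A ≤ f.ker) (hcard : Nat.card G ≤ Nat.card H * Nat.card A) :
    f.ker = A := by
  have : Finite H := Finite.of_surjective f hf
  refine (Subgroup.eq_of_le_of_card_ge hA ?_).symm
  refine Nat.le_of_mul_le_mul_left ?_ (Nat.card_pos (α := H))
  rw [mul_comm, f.card_ker_mul_card_of_surjective hf]
  exact hcard

theorem exists_monoidHom_of_card_closure_le [Finite G] [Finite H] {R : Set (G × H)}
    (hR : Subgroup.closure (Prod.fst '' R) = ⊤)
    (hcard : Nat.card (Subgroup.closure R) ≤ Nat.card G) :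
    ∃ π : G →* H, ∀ q ∈ R, π q.1 = q.2 := by
  set Γ := Subgroup.closure R
  let φ : Γ →* G := (MonoidHom.fst G H).comp Γ.subtype
  have hφ : Function.Surjective φ := by
    rw [← MonoidHom.range_eq_top, eq_top_iff, ← hR, Subgroup.closure_le]
    rintro _ ⟨q, hq, rfl⟩
    exact ⟨⟨q, Subgroup.subset_closure hq⟩, rfl⟩
  let e : Γ ≃* G := MulEquiv.ofBijective φ ((Nat.bijective_iff_surjective_and_card φ).2
    ⟨hφ, le_antisymm hcard (Nat.card_le_card_of_surjective φ hφ)⟩)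
  refine ⟨(MonoidHom.snd G H).comp (Γ.subtype.comp e.symm.toMonoidHom), fun q hq => ?_⟩
  have : e.symm q.1 = ⟨q, Subgroup.subset_closure hq⟩ := e.symm_apply_eq.2 rfl
  simp [this]

end Hom

theorem stmt_3_general (p : ℕ) (hp : p.Prime)
    (W : Type) [Group W] (x y z α a₁ a₂ a₃ a₄ : W)
    (hW : IsW1 p W x y z α a₁ a₂ a₃ a₄)
    (H : Type) [Group H] (x' y' z' γ : H)
    (hH : IsH1 p H x' y' z' γ) :
    ∃ π : W →* H, Function.Surjective π ∧
      π x = x' ∧ π y = y' ∧ π z = z' ∧ π α = γ ∧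
      π a₁ = 1 ∧ π a₂ = 1 ∧ π a₃ = 1 ∧ π a₄ = 1 ∧
      Nat.card π.ker = p ^ 4 ∧
      π.ker ≤ Subgroup.center W ∧ π.ker ≤ commutator W := by
  have hWrel := hW.w1Relations
  have hHrel := hH.w1Relations
  obtain ⟨hWgen, hWcard, -⟩ := hW
  obtain ⟨hHgen, hHcard, -⟩ := hH
  have : Finite W := Nat.finite_of_card_ne_zero (by simp [hWcard, hp.ne_zero])
  have : Finite H := Nat.finite_of_card_ne_zero (by simp [hHcard, hp.ne_zero])
  obtain ⟨π, hπ⟩ := exists_monoidHom_of_card_closure_le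
    (R := {(x, x'), (y, y'), (z, z'), (α, γ), (a₁, 1), (a₂, 1), (a₃, 1), (a₄, 1)})
    (by simpa [Set.image_insert_eq] using hWgen)
    (hWcard ▸ (hWrel.prod hHrel).card_closure_le hp.pos)
  simp only [Set.mem_insert_iff, Set.mem_singleton_iff, forall_eq_or_imp, forall_eq] at hπ
  obtain ⟨hx, hy, hz, hα, h₁, h₂, h₃, h₄⟩ := hπ
  have hsurj : Function.Surjective π := π.surjective_of_closure_subset_range hHgen <| by
    rintro _ (rfl | rfl | rfl | rfl)
    exacts [⟨x, hx⟩, ⟨y, hy⟩, ⟨z, hz⟩, ⟨α, hα⟩]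
  have hker : π.ker = Subgroup.closure {a₁, a₂, a₃, a₄} := by
    refine π.ker_eq_of_le_of_card_le hsurj ?_ ?_
    · rw [Subgroup.closure_le]
      rintro _ (rfl | rfl | rfl | rfl) <;> assumption
    · have := hWrel.card_closure_le_mul hp.pos
      rwa [hWgen, Subgroup.card_top, ← hHcard] at this
  refine ⟨π, hsurj, hx, hy, hz, hα, h₁, h₂, h₃, h₄, ?_,
    hker ▸ hWrel.closure_central_le_center hWgen, hker ▸ hWrel.closure_central_le_commutator⟩
  have hcard := π.card_ker_mul_card_of_surjective hsurj
  rw [hHcard, hWcard] at hcard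
  exact Nat.eq_of_mul_eq_mul_right (pow_pos hp.pos 5) (by rw [hcard]; ring)

/-- There is a surjective homomorphism `π : W₁ → H₁` sending `x, y, z, α` to `x, y, z, γ`
and `α₁, α₂, α₃, α₄` to `1`, whose kernel `K` has order `p⁴`, is central, and is contained
in the commutator subgroup of `W₁`. -/
theorem stmt_3 (p : ℕ) (hp : p.Prime) (hodd : Odd p)
    (W : Type) [Group W] (x y z α a₁ a₂ a₃ a₄ : W)
    (hW : IsW1 p W x y z α a₁ a₂ a₃ a₄)
    (H : Type) [Group H] (x' y' z' γ : H)
    (hH : IsH1 p H x' y' z' γ) :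
    ∃ π : W →* H, Function.Surjective π ∧
      π x = x' ∧ π y = y' ∧ π z = z' ∧ π α = γ ∧
      π a₁ = 1 ∧ π a₂ = 1 ∧ π a₃ = 1 ∧ π a₄ = 1 ∧
      Nat.card π.ker = p ^ 4 ∧
      π.ker ≤ Subgroup.center W ∧ π.ker ≤ commutator W :=
  stmt_3_general p hp W x y z α a₁ a₂ a₃ a₄ hW H x' y' z' γ hH
end

section
/- In the group W₁, for all integers i, j, e, f the conjugation identity (xⁱ yʲ)(αᵉ z^f)(y^{−j} x^{−i}) = αᵉ z^f α₁^{i·f} α₂^{j·f} α₃^{i·e} α₄^{j·e} holds. -/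
/-!
The elements `α₁, …, α₄` commute with a generating set, hence are central. When the commutator
`c = [u, v]` is central, `uᵐ vⁿ = vⁿ c^(mn) uᵐ`, so conjugation by `xⁱ yʲ` only multiplies `αᵉ`
and `z^f` by central factors, which can then be collected at the end.
-/

open Subgroup

section Central

variable {G : Type*} [Group G]

theorem mem_center_of_closure_eq_top {S : Set G} (hS : closure S = ⊤) {c : G}
    (hc : ∀ g ∈ S, c * g = g * c) : c ∈ center G := by
  rw [← centralizer_univ, ← coe_top, ← hS, centralizer_closure]
  exact mem_centralizer_iff.mpr fun g hg => (hc g hg).symm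

theorem commute_of_mem_center {c : G} (hc : c ∈ center G) (g : G) : Commute c g :=
  (mem_center_iff.mp hc g).symm

theorem semiconjBy_of_pcomm_eq {u v c : G} (huv : pcomm u v = c) (hc : c ∈ center G) :
    SemiconjBy u v (v * c) := by
  rw [SemiconjBy, mul_assoc, (commute_of_mem_center hc u).eq, ← huv, pcomm]
  group

theorem SemiconjBy.zpow_right_of_mem_center {u v c : G} (h : SemiconjBy u v (v * c))
    (hc : c ∈ center G) (n : ℤ) : SemiconjBy u (v ^ n) (v ^ n * c ^ n) := by
  simpa only [(commute_of_mem_center hc v).symm.mul_zpow] using h.zpow_right n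

theorem SemiconjBy.swap_of_mem_center {u v c : G} (h : SemiconjBy u v (v * c))
    (hc : c ∈ center G) : SemiconjBy v u (u * c⁻¹) :=
  calc v * u = v * c * u * c⁻¹ := by rw [mul_assoc v, (commute_of_mem_center hc u).eq]; group
    _ = u * v * c⁻¹ := by rw [h.eq]
    _ = u * c⁻¹ * v := by simp only [mul_assoc, (commute_of_mem_center (inv_mem hc) v).eq]

theorem semiconjBy_zpow_zpow_of_pcomm_eq {u v c : G} (huv : pcomm u v = c)
    (hc : c ∈ center G) (m n : ℤ) : SemiconjBy (u ^ m) (v ^ n) (v ^ n * c ^ (m * n)) := by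
  -- `SemiconjBy` only raises its middle argument to powers, so the roles of `u` and `v` are
  -- swapped to raise `u` to the `m`-th power.
  have hcn : (c ^ n)⁻¹ ∈ center G := inv_mem (zpow_mem hc n)
  have h := (((semiconjBy_of_pcomm_eq huv hc).zpow_right_of_mem_center hc n).swap_of_mem_center
    (zpow_mem hc n)).zpow_right_of_mem_center hcn m |>.swap_of_mem_center (zpow_mem hcn m)
  convert h using 2
  group

theorem SemiconjBy.mul_left_of_mem_center {u₁ u₂ v c₁ c₂ : G} (h₁ : SemiconjBy u₁ v (v * c₁))
    (h₂ : SemiconjBy u₂ v (v * c₂)) (hc₂ : c₂ ∈ center G) :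
    SemiconjBy (u₁ * u₂) v (v * (c₁ * c₂)) := by
  rw [← mul_assoc]
  exact (h₁.mul_right (commute_of_mem_center hc₂ u₁).symm).mul_left h₂

end Central

theorem stmt_12_general (p : ℕ)
    (W : Type) [Group W] (x y z α a₁ a₂ a₃ a₄ : W)
    (hW : IsW1 p W x y z α a₁ a₂ a₃ a₄) :
    ∀ i j e f : ℤ,
      (x ^ i * y ^ j) * (α ^ e * z ^ f) * (y ^ (-j) * x ^ (-i)) =
        α ^ e * z ^ f * a₁ ^ (i * f) * a₂ ^ (j * f) * a₃ ^ (i * e) * a₄ ^ (j * e) := by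
  obtain ⟨hgen, -, -, hxz, hyz, hxα, hyα, -, -, -, -, -, -, -, -, -, hcomm⟩ := hW
  have central {c : W} (hc : c ∈ ({a₁, a₂, a₃, a₄} : Set W)) : c ∈ center W :=
    mem_center_of_closure_eq_top hgen (hcomm c hc)
  intro i j e f
  have hα : SemiconjBy (x ^ i * y ^ j) (α ^ e) (α ^ e * (a₃ ^ (i * e) * a₄ ^ (j * e))) :=
    (semiconjBy_zpow_zpow_of_pcomm_eq hxα (central (by simp)) i e).mul_left_of_mem_center
      (semiconjBy_zpow_zpow_of_pcomm_eq hyα (central (by simp)) j e)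
      (zpow_mem (central (by simp)) _)
  have hz : SemiconjBy (x ^ i * y ^ j) (z ^ f) (z ^ f * (a₁ ^ (i * f) * a₂ ^ (j * f))) :=
    (semiconjBy_zpow_zpow_of_pcomm_eq hxz (central (by simp)) i f).mul_left_of_mem_center
      (semiconjBy_zpow_zpow_of_pcomm_eq hyz (central (by simp)) j f)
      (zpow_mem (central (by simp)) _)
  have hc : a₃ ^ (i * e) * a₄ ^ (j * e) ∈ center W :=
    mul_mem (zpow_mem (central (by simp)) _) (zpow_mem (central (by simp)) _)
  calc (x ^ i * y ^ j) * (α ^ e * z ^ f) * (y ^ (-j) * x ^ (-i))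
      = (x ^ i * y ^ j) * (α ^ e * z ^ f) * (x ^ i * y ^ j)⁻¹ := by group
    _ = α ^ e * (a₃ ^ (i * e) * a₄ ^ (j * e)) * (z ^ f * (a₁ ^ (i * f) * a₂ ^ (j * f))) := by
      rw [(hα.mul_right hz).eq, mul_inv_cancel_right]
    _ = α ^ e * (z ^ f * (a₁ ^ (i * f) * a₂ ^ (j * f))) * (a₃ ^ (i * e) * a₄ ^ (j * e)) := by
      rw [mul_assoc, (commute_of_mem_center hc _).eq, ← mul_assoc]
    _ = α ^ e * z ^ f * a₁ ^ (i * f) * a₂ ^ (j * f) * a₃ ^ (i * e) * a₄ ^ (j * e) := by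
      simp only [mul_assoc]

/-- In `W₁`, for all integers `i, j, e, f` one has
`(xⁱ yʲ)(αᵉ z^f)(y⁻ʲ x⁻ⁱ) = αᵉ z^f α₁^(i·f) α₂^(j·f) α₃^(i·e) α₄^(j·e)`. -/
theorem stmt_12 (p : ℕ) (hp : p.Prime) (hodd : Odd p)
    (W : Type) [Group W] (x y z α a₁ a₂ a₃ a₄ : W)
    (hW : IsW1 p W x y z α a₁ a₂ a₃ a₄) :
    ∀ i j e f : ℤ,
      (x ^ i * y ^ j) * (α ^ e * z ^ f) * (y ^ (-j) * x ^ (-i)) =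
        α ^ e * z ^ f * a₁ ^ (i * f) * a₂ ^ (j * f) * a₃ ^ (i * e) * a₄ ^ (j * e) :=
  stmt_12_general p W x y z α a₁ a₂ a₃ a₄ hW
end
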